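/- arXiv:1310.8107 — 3 statements merged into one kernel-verified Lean document; each statement's English description precedes it below -/
import Mathlib

section
/- Let M ≥ N. A frame Φ = {φ_k}_{k=1}^{M} for ℝ^N is N-scalable (i.e., some N-element subset of Φ can be rescaled by nonnegative scalars to a tight frame for ℝ^N) if and only if Φ contains an orthogonal basis of ℝ^N, i.e., there is a subset of N frame vectors that are nonzero and pairwise orthogonal. -/
open scoped BigOperators

namespace ScalableFrames

/-- The Euclidean dot product on `Fin n → ℝ`. -/
def dot {n : ℕ} (x y : Fin n → ℝ) : ℝ := ∑ i, x i * y i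

/-- `Φ = {φ_k}_{k=1}^M` is a frame for `ℝ^N`:
there are `0 < A, B` with `A‖x‖² ≤ ∑_k ⟨x, φ_k⟩² ≤ B‖x‖²` for all `x`. -/
def IsFrame {M N : ℕ} (Φ : Fin M → Fin N → ℝ) : Prop :=
  ∃ A B : ℝ, 0 < A ∧ 0 < B ∧ ∀ x : Fin N → ℝ,
    A * dot x x ≤ ∑ k, dot x (Φ k) ^ 2 ∧ ∑ k, dot x (Φ k) ^ 2 ≤ B * dot x x

/-- `Φ` is a tight frame for `ℝ^N` (the frame inequality holds with `A = B > 0`). -/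
def IsTight {M N : ℕ} (Φ : Fin M → Fin N → ℝ) : Prop :=
  ∃ A : ℝ, 0 < A ∧ ∀ x : Fin N → ℝ, ∑ k, dot x (Φ k) ^ 2 = A * dot x x

/-- The subfamily `{φ_i}_{i ∈ I}` is a tight frame for `ℝ^N`. -/
def IsTightOn {M N : ℕ} (Φ : Fin M → Fin N → ℝ) (I : Finset (Fin M)) : Prop :=
  ∃ A : ℝ, 0 < A ∧ ∀ x : Fin N → ℝ, ∑ k ∈ I, dot x (Φ k) ^ 2 = A * dot x x

/-- `Φ` is scalable: nonnegative scalars `c_k` make `{c_k φ_k}` a tight frame. -/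
def IsScalable {M N : ℕ} (Φ : Fin M → Fin N → ℝ) : Prop :=
  ∃ c : Fin M → ℝ, (∀ k, 0 ≤ c k) ∧ IsTight fun k => c k • Φ k

/-- `Φ` is strictly scalable: strictly positive scalars `c_k` make `{c_k φ_k}` a tight frame. -/
def IsStrictlyScalable {M N : ℕ} (Φ : Fin M → Fin N → ℝ) : Prop :=
  ∃ c : Fin M → ℝ, (∀ k, 0 < c k) ∧ IsTight fun k => c k • Φ k

/-- `Φ` is `m`-scalable: some subset `I` of size `m` admits nonnegative scalars `(c_i)_{i∈I}`
making `{c_i φ_i}_{i∈I}` a tight frame for `ℝ^N`. -/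
def IsMScalable {M N : ℕ} (Φ : Fin M → Fin N → ℝ) (m : ℕ) : Prop :=
  ∃ I : Finset (Fin M), I.card = m ∧
    ∃ c : Fin M → ℝ, (∀ i ∈ I, 0 ≤ c i) ∧ IsTightOn (fun k => c k • Φ k) I

/-- `Φ` is strictly `m`-scalable: some subset `I` of size `m` admits strictly positive scalars
`(c_i)_{i∈I}` making `{c_i φ_i}_{i∈I}` a tight frame for `ℝ^N`. -/
def IsStrictlyMScalable {M N : ℕ} (Φ : Fin M → Fin N → ℝ) (m : ℕ) : Prop :=
  ∃ I : Finset (Fin M), I.card = m ∧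
    ∃ c : Fin M → ℝ, (∀ i ∈ I, 0 < c i) ∧ IsTightOn (fun k => c k • Φ k) I

/-- The rank-one outer product `φφᵀ` as an `N×N` matrix. -/
def outer {N : ℕ} (φ : Fin N → ℝ) : Matrix (Fin N) (Fin N) ℝ := Matrix.vecMulVec φ φ

/-- `d = (N-1)(N+2)/2`. -/
def Fdim (N : ℕ) : ℕ := (N - 1) * (N + 2) / 2

/-- The map `F : ℝ^N → ℝ^d` obtained by stacking the blocks
`F_0(x) = (x_1²-x_2², …, x_1²-x_N²)` and `F_k(x) = (x_k x_{k+1}, …, x_k x_N)`, `k = 1,…,N-1`;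
in `1`-based indexing the entry `x_k x_ℓ` sits at position `k(2N-1-k)/2 + ℓ - 1`. -/
def Fmap {N : ℕ} (x : Fin N → ℝ) : Fin (Fdim N) → ℝ := fun j =>
  (if h : j.val + 1 < N then x ⟨0, by omega⟩ ^ 2 - x ⟨j.val + 1, h⟩ ^ 2 else 0) +
  ∑ a : Fin N, ∑ b : Fin N,
    if a.val < b.val ∧ j.val + 1 = (a.val + 1) * (2 * N - 2 - a.val) / 2 + b.val
    then x a * x b else 0

open Classical in
/-- `‖u‖₀`, the number of nonzero entries of `u`. -/
noncomputable def zeroNorm {n : ℕ} (u : Fin n → ℝ) : ℕ :=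
  (Finset.univ.filter fun i => u i ≠ 0).card

/-! Put the `N` rescaled vectors `ψ_i = c_i φ_i` as the rows of a square matrix `Ψ`. Tightness
with bound `A` says `Ψᵀ Ψ = A • 1`; since `Ψ` is square this is equivalent to `Ψ Ψᵀ = A • 1`,
i.e. the `ψ_i` are pairwise orthogonal of common squared norm `A > 0`. So every `c_i` and every
`φ_i` is nonzero and the `φ_i` are orthogonal. Conversely, normalising `N` nonzero orthogonal
vectors gives an orthonormal family, which is a tight frame with bound `1` by the same
equivalence. -/

open Matrix

lemma dot_eq_dotProduct {n : ℕ} (x y : Fin n → ℝ) : dot x y = x ⬝ᵥ y := rfl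

lemma dot_smul_smul {n : ℕ} (a b : ℝ) (x y : Fin n → ℝ) :
    dot (a • x) (b • y) = a * b * dot x y := by
  simp only [dot_eq_dotProduct, smul_dotProduct, dotProduct_smul, smul_eq_mul]
  ring

lemma dot_self_pos {n : ℕ} {x : Fin n → ℝ} (hx : x ≠ 0) : 0 < dot x x := by
  rw [dot_eq_dotProduct]
  exact lt_of_le_of_ne (Finset.sum_nonneg fun i _ => mul_self_nonneg (x i))
    (Ne.symm (dotProduct_self_eq_zero.not.2 hx))

lemma dot_inv_sqrt_smul_self {n : ℕ} {x : Fin n → ℝ} (hx : x ≠ 0) :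
    dot ((√(dot x x))⁻¹ • x) ((√(dot x x))⁻¹ • x) = 1 := by
  have hpos := dot_self_pos hx
  rw [dot_smul_smul, ← mul_inv, Real.mul_self_sqrt hpos.le, inv_mul_cancel₀ hpos.ne']

lemma eq_zero_of_isSymm_of_dotProduct_mulVec_self {m : Type*} [Fintype m] [DecidableEq m]
    {S : Matrix m m ℝ} (hS : S.IsSymm) (h : ∀ x, x ⬝ᵥ S *ᵥ x = 0) : S = 0 := by
  have hpsd : S.PosSemidef :=
    .of_dotProduct_mulVec_nonneg (isHermitian_iff_isSymm.2 hS) fun x => (h x).ge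
  have hmulVec x : S *ᵥ x = 0 := (hpsd.dotProduct_mulVec_zero_iff x).1 (h x)
  ext i j
  simpa using congrFun (hmulVec (Pi.single j 1)) i

section Family

variable {ι : Type*} [Fintype ι] {n : ℕ}

lemma sum_dot_sq_eq_dotProduct_mulVec (ψ : ι → Fin n → ℝ) (x : Fin n → ℝ) :
    ∑ k, dot x (ψ k) ^ 2 = x ⬝ᵥ ((of ψ)ᵀ * of ψ) *ᵥ x := by
  have hrow : ∀ k, dot x (ψ k) = (of ψ *ᵥ x) k := fun k => dotProduct_comm x (ψ k)
  rw [← mulVec_mulVec, dotProduct_mulVec, vecMul_transpose]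
  simp only [hrow, sq, dotProduct]

lemma sum_dot_sq_eq_iff_transpose_mul_self (ψ : ι → Fin n → ℝ) (A : ℝ) :
    (∀ x, ∑ k, dot x (ψ k) ^ 2 = A * dot x x) ↔ (of ψ)ᵀ * of ψ = A • 1 := by
  simp_rw [sum_dot_sq_eq_dotProduct_mulVec, dot_eq_dotProduct]
  constructor
  · intro h
    refine sub_eq_zero.1 (eq_zero_of_isSymm_of_dotProduct_mulVec_self ?_ fun x => ?_)
    · exact IsSymm.sub (by simp [IsSymm, transpose_mul]) (isSymm_one.smul A)
    · rw [sub_mulVec, dotProduct_sub, h, smul_mulVec, one_mulVec, dotProduct_smul, smul_eq_mul,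
        sub_self]
  · rintro h x
    rw [h, smul_mulVec, one_mulVec, dotProduct_smul, smul_eq_mul]

variable [DecidableEq ι]

lemma transpose_mul_self_eq_smul_one_iff (e : ι ≃ Fin n) (Ψ : Matrix ι (Fin n) ℝ) {A : ℝ}
    (hA : A ≠ 0) : Ψᵀ * Ψ = A • 1 ↔ Ψ * Ψᵀ = A • 1 := by
  rw [← inv_smul_eq_iff₀ hA, ← inv_smul_eq_iff₀ hA, ← Matrix.smul_mul, ← Matrix.mul_smul]
  exact mul_eq_one_comm_of_equiv e.symm

lemma sum_dot_sq_eq_iff_dot_eq_ite (e : ι ≃ Fin n) (ψ : ι → Fin n → ℝ) {A : ℝ} (hA : A ≠ 0) :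
    (∀ x, ∑ k, dot x (ψ k) ^ 2 = A * dot x x) ↔
      ∀ i j, dot (ψ i) (ψ j) = if i = j then A else 0 := by
  rw [sum_dot_sq_eq_iff_transpose_mul_self, transpose_mul_self_eq_smul_one_iff e _ hA,
    ← Matrix.ext_iff]
  simp only [mul_apply, transpose_apply, of_apply, Matrix.smul_apply, one_apply, smul_eq_mul,
    mul_ite, mul_one, mul_zero, dot]

end Family

lemma isTightOn_iff {M n : ℕ} {I : Finset (Fin M)} (hI : I.card = n) (Φ : Fin M → Fin n → ℝ) :
    IsTightOn Φ I ↔ ∃ A, 0 < A ∧ ∀ i ∈ I, ∀ j ∈ I, dot (Φ i) (Φ j) = if i = j then A else 0 := by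
  have e : I ≃ Fin n := I.equivFinOfCardEq hI
  simp only [IsTightOn, ← Finset.sum_coe_sort I]
  refine exists_congr fun A => and_congr_right fun hA => ?_
  rw [sum_dot_sq_eq_iff_dot_eq_ite e (fun k : I => Φ k) hA.ne']
  simp only [Subtype.forall, Subtype.mk.injEq]

theorem statement1_general {M N : ℕ} (Φ : Fin M → Fin N → ℝ) :
    IsMScalable Φ N ↔
      ∃ I : Finset (Fin M), I.card = N ∧ (∀ i ∈ I, Φ i ≠ 0) ∧
        ∀ i ∈ I, ∀ j ∈ I, i ≠ j → dot (Φ i) (Φ j) = 0 := by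
  constructor
  · rintro ⟨I, hI, c, -, htight⟩
    obtain ⟨A, hA, hgram⟩ := (isTightOn_iff hI _).1 htight
    have hdot i (hi : i ∈ I) j (hj : j ∈ I) :
        c i * c j * dot (Φ i) (Φ j) = if i = j then A else 0 := by
      rw [← dot_smul_smul]; exact hgram i hi j hj
    have hnorm i (hi : i ∈ I) : c i * c i * dot (Φ i) (Φ i) ≠ 0 := by
      rw [hdot i hi i hi, if_pos rfl]; exact hA.ne'
    have hc i (hi : i ∈ I) : c i ≠ 0 := fun hzero => hnorm i hi (by simp [hzero])
    refine ⟨I, hI, fun i hi hzero => hnorm i hi (by simp [hzero, dot]), fun i hi j hj hij => ?_⟩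
    have hcij := hdot i hi j hj
    rw [if_neg hij] at hcij
    exact (mul_eq_zero.1 hcij).resolve_left (mul_ne_zero (hc i hi) (hc j hj))
  · rintro ⟨I, hI, hne, horth⟩
    refine ⟨I, hI, fun k => (√(dot (Φ k) (Φ k)))⁻¹, fun _ _ => by positivity,
      (isTightOn_iff hI _).2 ⟨1, one_pos, fun i hi j hj => ?_⟩⟩
    split_ifs with hij
    · subst hij; exact dot_inv_sqrt_smul_self (hne i hi)
    · rw [dot_smul_smul, horth i hi j hj hij, mul_zero]

/-- For `M ≥ N`, a frame `Φ = {φ_k}_{k=1}^M` for `ℝ^N` is `N`-scalable if and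
only if `Φ` contains an orthogonal basis of `ℝ^N`, i.e. there is a subset of `N` frame vectors
which are nonzero and pairwise orthogonal. -/
theorem statement1 {M N : ℕ} (hMN : N ≤ M) (Φ : Fin M → Fin N → ℝ) (hframe : IsFrame Φ) :
    IsMScalable Φ N ↔
      ∃ I : Finset (Fin M), I.card = N ∧ (∀ i ∈ I, Φ i ≠ 0) ∧
        ∀ i ∈ I, ∀ j ∈ I, i ≠ j → dot (Φ i) (Φ j) = 0 :=
  statement1_general Φ

end ScalableFrames
end

section
/- For M ≥ N(N+1)/2, every scalable frame Φ = {φ_k}_{k=1}^{M} for ℝ^N is N(N+1)/2-scalable; that is, the set of scalable frames in F(M,N) equals the set of N(N+1)/2-scalable frames in F(M,N). -/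
open scoped BigOperators

namespace ScalableFrames

/-!
Rescaling `φ_k` by `c_k` turns tightness into the linear condition `∑ c_k² φ_k φ_kᵀ = A • 1`, so
`Φ` is scalable iff `A • 1` lies in the convex cone spanned by the rank-one matrices `φ_k φ_kᵀ`.
These live in the space of symmetric `N × N` matrices, of dimension `N(N+1)/2`, and Carathéodory's
theorem for cones writes any point of such a cone with at most `N(N+1)/2` generators.
-/

lemma sum_ite_mem_smul_of_subset {ι R M : Type*} [DecidableEq ι] [Semiring R]
    [AddCommMonoid M] [Module R M] (v : ι → M) (d : ι → R) {S T : Finset ι} (hTS : T ⊆ S) :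
    ∑ i ∈ S, (if i ∈ T then d i else 0) • v i = ∑ i ∈ T, d i • v i := by
  simp only [ite_smul, zero_smul, Finset.sum_ite_mem, Finset.inter_eq_right.mpr hTS]

section ConicCaratheodory

open Finset Module

variable {𝕜 ι V : Type*} [Field 𝕜] [LinearOrder 𝕜] [IsStrictOrderedRing 𝕜]
  [AddCommGroup V] [Module 𝕜 V]

lemma exists_sum_smul_eq_zero_pos_of_not_linearIndepOn {v : ι → V} {S : Finset ι}
    (hS : ¬LinearIndepOn 𝕜 v S) : ∃ g : ι → 𝕜, ∑ i ∈ S, g i • v i = 0 ∧ ∃ i ∈ S, 0 < g i := by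
  obtain ⟨g, hg, i, hi, hgi⟩ := not_linearIndepOn_finset_iff.mp hS
  rcases hgi.lt_or_gt with hneg | hpos
  · refine ⟨-g, ?_, i, hi, by simpa using hneg⟩
    simp [neg_smul, sum_neg_distrib, hg]
  · exact ⟨g, hg, i, hi, hpos⟩

/-- The exchange step: along a linear relation `∑ g i • v i = 0`, decrease the weights until the
first one (the minimiser of `d i / g i` among `g i > 0`) vanishes. -/
lemma exists_erase_sum_smul_eq_of_not_linearIndepOn [DecidableEq ι] {v : ι → V} {S : Finset ι}
    (hS : ¬LinearIndepOn 𝕜 v S) (d : ι → 𝕜) (hd : ∀ i ∈ S, 0 ≤ d i) :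
    ∃ i₀ ∈ S, ∃ d' : ι → 𝕜, (∀ i ∈ S.erase i₀, 0 ≤ d' i) ∧
      ∑ i ∈ S.erase i₀, d' i • v i = ∑ i ∈ S, d i • v i := by
  obtain ⟨g, hg, i₁, hi₁, hgi₁⟩ := exists_sum_smul_eq_zero_pos_of_not_linearIndepOn hS
  obtain ⟨i₀, hi₀P, hi₀min⟩ := (S.filter (0 < g ·)).exists_min_image (fun i => d i / g i)
    ⟨i₁, mem_filter.mpr ⟨hi₁, hgi₁⟩⟩
  obtain ⟨hi₀, hgi₀⟩ := mem_filter.mp hi₀P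
  set t := d i₀ / g i₀
  have ht : 0 ≤ t := div_nonneg (hd i₀ hi₀) hgi₀.le
  have hnonneg : ∀ i ∈ S, 0 ≤ d i - t * g i := by
    intro i hi
    rcases le_or_gt (g i) 0 with hgi | hgi
    · nlinarith [hd i hi]
    · have : t ≤ d i / g i := hi₀min i (mem_filter.mpr ⟨hi, hgi⟩)
      rw [le_div_iff₀ hgi] at this
      linarith
  have hsum : ∑ i ∈ S, (d i - t * g i) • v i = ∑ i ∈ S, d i • v i := by
    simp only [sub_smul, mul_smul, sum_sub_distrib, ← smul_sum, hg, smul_zero, sub_zero]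
  refine ⟨i₀, hi₀, fun i => d i - t * g i, fun i hi => hnonneg i (mem_of_mem_erase hi), ?_⟩
  rw [sum_erase _ (by simp [t, div_mul_cancel₀ _ hgi₀.ne']), hsum]

variable [FiniteDimensional 𝕜 V]

/-- Carathéodory's theorem for convex cones. -/
theorem exists_subset_card_le_finrank_sum_smul_eq (v : ι → V) (S : Finset ι) (d : ι → 𝕜)
    (hd : ∀ i ∈ S, 0 ≤ d i) :
    ∃ T ⊆ S, #T ≤ finrank 𝕜 V ∧ ∃ d' : ι → 𝕜, (∀ i ∈ T, 0 ≤ d' i) ∧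
      ∑ i ∈ T, d' i • v i = ∑ i ∈ S, d i • v i := by
  classical
  induction S using Finset.strongInduction generalizing d with
  | H S ih =>
    by_cases hS : LinearIndepOn 𝕜 v S
    · refine ⟨S, subset_rfl, ?_, d, hd, rfl⟩
      simpa using hS.fintype_card_le_finrank
    · obtain ⟨i₀, hi₀, d', hd', hsum⟩ := exists_erase_sum_smul_eq_of_not_linearIndepOn hS d hd
      obtain ⟨T, hT, hcard, d'', hd'', hsum'⟩ := ih _ (erase_ssubset hi₀) d' hd'
      exact ⟨T, hT.trans (erase_subset _ _), hcard, d'', hd'', hsum'.trans hsum⟩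

theorem exists_subset_card_eq_sum_smul_eq (v : ι → V) (S : Finset ι) (d : ι → 𝕜)
    (hd : ∀ i ∈ S, 0 ≤ d i) {m : ℕ} (hm : finrank 𝕜 V ≤ m) (hmS : m ≤ #S) :
    ∃ T ⊆ S, #T = m ∧ ∃ d' : ι → 𝕜, (∀ i ∈ T, 0 ≤ d' i) ∧
      ∑ i ∈ T, d' i • v i = ∑ i ∈ S, d i • v i := by
  classical
  obtain ⟨T₀, hT₀S, hT₀, d₀, hd₀, hsum⟩ := exists_subset_card_le_finrank_sum_smul_eq v S d hd
  obtain ⟨T, hT₀T, hTS, hT⟩ := exists_subsuperset_card_eq hT₀S (hT₀.trans hm) hmS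
  refine ⟨T, hTS, hT, fun i => if i ∈ T₀ then d₀ i else 0, fun i _ => ?_,
    (sum_ite_mem_smul_of_subset v d₀ hT₀T).trans hsum⟩
  by_cases hi : i ∈ T₀ <;> simp [hi, hd₀ i]

end ConicCaratheodory

section Gram

open Finset

variable {N : ℕ}

/-- Symmetric `N × N` matrices are encoded as functions on unordered pairs `s(a, b)`, a space of
dimension `N(N+1)/2`. -/
def sym2Outer (φ : Fin N → ℝ) : Sym2 (Fin N) → ℝ :=
  Sym2.lift ⟨fun a b => φ a * φ b, fun _ _ => mul_comm _ _⟩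

def sym2Diag (N : ℕ) (A : ℝ) : Sym2 (Fin N) → ℝ := fun z => if z.IsDiag then A else 0

lemma finrank_sym2_fun : Module.finrank ℝ (Sym2 (Fin N) → ℝ) = N * (N + 1) / 2 := by
  rw [Module.finrank_fintype_fun_eq_card, Sym2.card, Fintype.card_fin, Nat.choose_two_right,
    Nat.add_sub_cancel, Nat.mul_comm]

lemma dot_smul_right (x y : Fin N → ℝ) (c : ℝ) : dot x (c • y) = c * dot x y := by
  simp only [dot, Pi.smul_apply, smul_eq_mul, mul_sum]
  exact sum_congr rfl fun i _ => by ring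

lemma dot_add_left (x y z : Fin N → ℝ) : dot (x + y) z = dot x z + dot y z := by
  simp only [dot, Pi.add_apply, add_mul, sum_add_distrib]

lemma dot_single_left (a : Fin N) (y : Fin N → ℝ) : dot (Pi.single a 1) y = y a := by
  simp [dot, Pi.single_apply]

lemma dot_sq_eq_sum (x φ : Fin N → ℝ) : dot x φ ^ 2 = ∑ a, ∑ b, x a * x b * (φ a * φ b) := by
  rw [sq, dot, sum_mul_sum]
  exact sum_congr rfl fun a _ => sum_congr rfl fun b _ => by ring

lemma sum_smul_sym2Outer_eq_sym2Diag_iff {ι : Type*} (Φ : ι → Fin N → ℝ) (S : Finset ι)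
    (w : ι → ℝ) (A : ℝ) :
    ∑ k ∈ S, w k • sym2Outer (Φ k) = sym2Diag N A ↔
      ∀ a b, ∑ k ∈ S, w k * (Φ k a * Φ k b) = if a = b then A else 0 := by
  constructor
  · intro h a b
    simpa [sym2Outer, sym2Diag, Sym2.mk_isDiag_iff] using congrFun h s(a, b)
  · intro h
    funext z
    induction z using Sym2.ind with
    | h a b => simpa [sym2Outer, sym2Diag, Sym2.mk_isDiag_iff] using h a b

lemma sum_mul_dot_sq_eq_iff {ι : Type*} (Φ : ι → Fin N → ℝ) (S : Finset ι) (w : ι → ℝ)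
    (A : ℝ) :
    (∀ x, ∑ k ∈ S, w k * dot x (Φ k) ^ 2 = A * dot x x) ↔
      ∑ k ∈ S, w k • sym2Outer (Φ k) = sym2Diag N A := by
  rw [sum_smul_sym2Outer_eq_sym2Diag_iff]
  set G : Fin N → Fin N → ℝ := fun a b => ∑ k ∈ S, w k * (Φ k a * Φ k b)
  constructor
  · intro h
    have hdiag : ∀ a, G a a = A := fun a => by
      simpa [dot_single_left, G, ← sq] using h (Pi.single a 1)
    intro a b
    split_ifs with hab
    · exact hab ▸ hdiag a
    · have hpair := h (Pi.single a 1 + Pi.single b 1)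
      simp only [dot_add_left, dot_single_left, Pi.add_apply, Pi.single_eq_same,
        Pi.single_eq_of_ne hab, Pi.single_eq_of_ne (Ne.symm hab)] at hpair
      have hexpand : ∑ k ∈ S, w k * (Φ k a + Φ k b) ^ 2 = G a a + G b b + 2 * G a b := by
        simp only [G, mul_sum, ← sum_add_distrib]
        exact sum_congr rfl fun k _ => by ring
      linarith [hdiag a, hdiag b]
  · intro h x
    calc ∑ k ∈ S, w k * dot x (Φ k) ^ 2 = ∑ a, ∑ b, x a * x b * G a b := by
          simp only [dot_sq_eq_sum, G, mul_sum]
          rw [sum_comm]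
          refine sum_congr rfl fun a _ => ?_
          rw [sum_comm]
          exact sum_congr rfl fun b _ => sum_congr rfl fun k _ => by ring
      _ = A * dot x x := by
          simp only [G, h, mul_ite, mul_zero, sum_ite_eq, mem_univ, if_true, dot, mul_sum]
          exact sum_congr rfl fun a _ => by ring

end Gram

open Finset

lemma exists_nonneg_isTightOn_smul_iff {M N : ℕ} (Φ : Fin M → Fin N → ℝ) (I : Finset (Fin M)) :
    (∃ c : Fin M → ℝ, (∀ i ∈ I, 0 ≤ c i) ∧ IsTightOn (fun k => c k • Φ k) I) ↔
      ∃ w : Fin M → ℝ, (∀ i ∈ I, 0 ≤ w i) ∧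
        ∃ A, 0 < A ∧ ∑ k ∈ I, w k • sym2Outer (Φ k) = sym2Diag N A := by
  simp only [IsTightOn, ← sum_mul_dot_sq_eq_iff, dot_smul_right, mul_pow]
  constructor
  · rintro ⟨c, -, A, hA, h⟩
    exact ⟨fun k => c k ^ 2, fun i _ => sq_nonneg _, A, hA, h⟩
  · rintro ⟨w, hw, A, hA, h⟩
    refine ⟨fun k => √(w k), fun i _ => Real.sqrt_nonneg _, A, hA, fun x => ?_⟩
    rw [← h x]
    exact sum_congr rfl fun k hk => by rw [Real.sq_sqrt (hw k hk)]

lemma isScalable_iff_exists_isTightOn_univ {M N : ℕ} (Φ : Fin M → Fin N → ℝ) :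
    IsScalable Φ ↔
      ∃ c : Fin M → ℝ, (∀ i ∈ univ, 0 ≤ c i) ∧ IsTightOn (fun k => c k • Φ k) univ := by
  simp only [IsScalable, IsTight, IsTightOn, mem_univ, true_imp_iff]

theorem statement6_general {M N : ℕ} (h : N * (N + 1) / 2 ≤ M)
    (Φ : Fin M → Fin N → ℝ) :
    IsScalable Φ ↔ IsMScalable Φ (N * (N + 1) / 2) := by
  classical
  simp only [isScalable_iff_exists_isTightOn_univ, IsMScalable, exists_nonneg_isTightOn_smul_iff]
  constructor
  · rintro ⟨w, hw, A, hA, hsum⟩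
    obtain ⟨I, -, hI, w', hw', hsum'⟩ := exists_subset_card_eq_sum_smul_eq (sym2Outer ∘ Φ) univ w
      hw finrank_sym2_fun.le (by simpa using h)
    exact ⟨I, hI, w', hw', A, hA, hsum'.trans hsum⟩
  · rintro ⟨I, -, w, hw, A, hA, hsum⟩
    refine ⟨fun k => if k ∈ I then w k else 0, fun k _ => ?_, A, hA,
      (sum_ite_mem_smul_of_subset (sym2Outer ∘ Φ) w (subset_univ I)).trans hsum⟩
    by_cases hk : k ∈ I <;> simp [hk, hw k]

/-- For `M ≥ N(N+1)/2`, a frame `Φ` for `ℝ^N` is scalable if and only if it is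
`N(N+1)/2`-scalable; i.e. `SC(M,N) = SC(M, N, N(N+1)/2)`. -/
theorem statement6 {M N : ℕ} (h : N * (N + 1) / 2 ≤ M)
    (Φ : Fin M → Fin N → ℝ) (hframe : IsFrame Φ) :
    IsScalable Φ ↔ IsMScalable Φ (N * (N + 1) / 2) :=
  statement6_general h Φ

end ScalableFrames
end

section
/- Let N ≥ 2, d = (N−1)(N+2)/2, and M ≥ d+1. Let Φ = {φ_k}_{k=1}^M be a frame for ℝ^N that is strictly (d+1)-scalable but not d-scalable. Then F(Φ) = {F(φ_k)}_{k=1}^M is a frame for ℝ^d, i.e., the vectors F(φ_1),...,F(φ_M) span ℝ^d. -/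
open scoped BigOperators

namespace ScalableFrames

/-!
`F(x)` lists exactly the entries of `x xᵀ` whose weighted sums must vanish for a frame operator
to be scalar (the differences of diagonal entries and the off-diagonal entries), so
`{c_k φ_k}_{k ∈ I}` is tight iff `∑_{k ∈ I} c_k² F(φ_k) = 0` and `∑_{k ∈ I} c_k² φ_k(1)² > 0`.
If the `F(φ_k)` did not span `ℝ^d`, the `d + 1` vectors `(F(φ_k), φ_k(1)²)`, `k ∈ I`, would be
linearly dependent; moving the weights `c_k²` along a dependence until one of them vanishes
(as in Carathéodory's theorem) preserves both conditions and yields a tight subframe of `d`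
vectors.
-/

open Matrix

section PairIndex

variable {N a b a' b' : ℕ}

/-- The 1-based position of the entry `x a * x b` (`a < b`, 0-based) in `Fmap x`. -/
def pairIndex (N a b : ℕ) : ℕ := (a + 1) * (2 * N - 2 - a) / 2 + b

lemma two_dvd_succ_mul_sub (N a : ℕ) : 2 ∣ (a + 1) * (2 * N - 2 - a) := by
  rcases Nat.even_or_odd a with ⟨r, rfl⟩ | ⟨r, rfl⟩
  · rcases le_or_gt (r + r) (2 * N - 2) with h | h
    · exact dvd_mul_of_dvd_right (by omega) _
    · simp [show 2 * N - 2 - (r + r) = 0 by omega]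
  · exact dvd_mul_of_dvd_left ⟨r + 1, by ring⟩ _

lemma two_mul_pairIndex (ha : a < N) :
    (2 * pairIndex N a b : ℤ) = (a + 1) * (2 * N - 2 - a) + 2 * b := by
  have h := Nat.mul_div_cancel' (two_dvd_succ_mul_sub N a)
  have h' : ((2 * N - 2 - a : ℕ) : ℤ) = 2 * N - 2 - a := by omega
  have h2 : 2 * pairIndex N a b = (a + 1) * (2 * N - 2 - a) + 2 * b := by
    rw [pairIndex, Nat.mul_add, h]
  rw [← h']
  exact_mod_cast h2

lemma two_mul_Fdim (hN : 0 < N) : (2 * Fdim N : ℤ) = (N - 1) * (N + 2) := by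
  have h : 2 ∣ (N - 1) * (N + 2) := by
    rcases Nat.even_or_odd N with ⟨r, rfl⟩ | ⟨r, rfl⟩
    · exact dvd_mul_of_dvd_right ⟨r + 1, by omega⟩ _
    · exact dvd_mul_of_dvd_left ⟨r, by omega⟩ _
  rw [Fdim]
  have := Nat.mul_div_cancel' h
  have h' : ((N - 1 : ℕ) : ℤ) = N - 1 := by omega
  rw [← h']
  exact_mod_cast this

lemma le_pairIndex (hab : a < b) (hb : b < N) : N ≤ pairIndex N a b := by
  have := two_mul_pairIndex (b := b) (hab.trans hb)
  zify
  nlinarith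

lemma pairIndex_le_Fdim (hab : a < b) (hb : b < N) : pairIndex N a b ≤ Fdim N := by
  have h1 := two_mul_pairIndex (b := b) (hab.trans hb)
  have h2 := two_mul_Fdim (N := N) (by omega)
  zify
  nlinarith

lemma pairIndex_lt_pairIndex (hab : a < b) (hb : b < N) (hab' : a' < b') (hb' : b' < N)
    (ha : a < a') : pairIndex N a b < pairIndex N a' b' := by
  have h1 := two_mul_pairIndex (b := b) (hab.trans hb)
  have h2 := two_mul_pairIndex (b := b') (hab'.trans hb')
  zify
  nlinarith

lemma eq_and_eq_of_pairIndex_eq (hab : a < b) (hb : b < N) (hab' : a' < b') (hb' : b' < N)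
    (h : pairIndex N a b = pairIndex N a' b') : a = a' ∧ b = b' := by
  rcases lt_trichotomy a a' with ha | rfl | ha
  · exact absurd h (pairIndex_lt_pairIndex hab hb hab' hb' ha).ne
  · exact ⟨rfl, by simpa [pairIndex] using h⟩
  · exact absurd h (pairIndex_lt_pairIndex hab' hb' hab hb ha).ne'

end PairIndex

section Flinear

variable {N : ℕ}

def Flinear (N : ℕ) : Matrix (Fin N) (Fin N) ℝ →ₗ[ℝ] Fin (Fdim N) → ℝ where
  toFun S j :=
    (if h : j.val + 1 < N then S ⟨0, by omega⟩ ⟨0, by omega⟩ - S ⟨j.val + 1, h⟩ ⟨j.val + 1, h⟩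
      else 0) +
    ∑ a : Fin N, ∑ b : Fin N, if a.val < b.val ∧ j.val + 1 = pairIndex N a b then S a b else 0
  map_add' S T := by
    funext j
    rw [Pi.add_apply, add_add_add_comm]
    congr 1
    · split_ifs
      · simp only [Matrix.add_apply]; ring
      · simp
    · simp only [Matrix.add_apply, ← Finset.sum_add_distrib, ite_add_ite, add_zero]
  map_smul' c S := by
    funext j
    rw [Pi.smul_apply, smul_eq_mul, mul_add, RingHom.id_apply]
    congr 1
    · split_ifs
      · simp only [Matrix.smul_apply, smul_eq_mul]; ring
      · simp
    · simp only [Matrix.smul_apply, smul_eq_mul, Finset.mul_sum, mul_ite, mul_zero]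

lemma Flinear_outer (x : Fin N → ℝ) : Flinear N (outer x) = Fmap x := by
  ext j
  simp [Flinear, Fmap, outer, vecMulVec_apply, sq, pairIndex]

lemma Flinear_smul_one (A : ℝ) : Flinear N (A • 1) = 0 := by
  ext j
  simp only [Flinear, LinearMap.coe_mk, AddHom.coe_mk, Pi.zero_apply, Matrix.smul_apply,
    Matrix.one_apply_eq, sub_self, dite_eq_ite, ite_self, zero_add]
  refine Finset.sum_eq_zero fun a _ => Finset.sum_eq_zero fun b _ => ?_
  split_ifs with h
  · simp [Matrix.one_apply_ne (Fin.ne_of_lt h.1)]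
  · rfl

def pairCoord {a b : Fin N} (hab : a < b) : Fin (Fdim N) :=
  ⟨pairIndex N a b - 1, by have := pairIndex_le_Fdim hab b.2; have := le_pairIndex hab b.2; omega⟩

lemma Flinear_apply_pairCoord (S : Matrix (Fin N) (Fin N) ℝ) {a b : Fin N} (hab : a < b) :
    Flinear N S (pairCoord hab) = S a b := by
  have hN := le_pairIndex hab b.2
  have hj : (pairCoord hab).val + 1 = pairIndex N a b := by simp only [pairCoord]; omega
  simp only [Flinear, LinearMap.coe_mk, AddHom.coe_mk, hj,
    dif_neg (show ¬ pairIndex N a b < N by omega), zero_add]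
  rw [Finset.sum_eq_single a, Finset.sum_eq_single b, if_pos ⟨hab, rfl⟩]
  · intro b' _ hb'
    exact if_neg fun h => hb' (Fin.ext (eq_and_eq_of_pairIndex_eq h.1 b'.2 hab b.2 h.2.symm).2)
  · simp
  · intro a' _ ha'
    exact Finset.sum_eq_zero fun b' _ => if_neg fun h =>
      ha' (Fin.ext (eq_and_eq_of_pairIndex_eq h.1 b'.2 hab b.2 h.2.symm).1)
  · simp

variable [NeZero N]

def diagCoord {a : Fin N} (ha : a ≠ 0) : Fin (Fdim N) :=
  ⟨a - 1, by
    have := Fin.pos_iff_ne_zero.2 ha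
    have := pairIndex_le_Fdim this a.2
    have := le_pairIndex (Fin.pos_iff_ne_zero.2 ha) a.2
    omega⟩

lemma Flinear_apply_diagCoord (S : Matrix (Fin N) (Fin N) ℝ) {a : Fin N} (ha : a ≠ 0) :
    Flinear N S (diagCoord ha) = S 0 0 - S a a := by
  have ha' := Fin.pos_iff_ne_zero.2 ha
  have hj : (diagCoord ha).val + 1 = a := by simp only [diagCoord]; omega
  simp only [Flinear, LinearMap.coe_mk, AddHom.coe_mk, hj, dif_pos a.2]
  rw [Finset.sum_eq_zero, add_zero]
  · rfl
  refine fun a' _ => Finset.sum_eq_zero fun b' _ => if_neg fun h => ?_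
  have := le_pairIndex h.1 b'.2
  omega

lemma eq_smul_one_of_Flinear_eq_zero {S : Matrix (Fin N) (Fin N) ℝ} (hS : S.IsSymm)
    (h : Flinear N S = 0) : S = S 0 0 • 1 := by
  have hoff : ∀ a b : Fin N, a < b → S a b = 0 := fun a b hab => by
    simpa [h] using (Flinear_apply_pairCoord S hab).symm
  have hdiag : ∀ a : Fin N, S a a = S 0 0 := fun a => by
    by_cases ha : a = 0
    · rw [ha]
    · linarith [show Flinear N S (diagCoord ha) = 0 by simp [h], Flinear_apply_diagCoord S ha]
  ext a b
  rcases lt_trichotomy a b with hab | rfl | hab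
  · simp [hoff a b hab, one_apply_ne hab.ne]
  · simp [hdiag]
  · simp [hS.apply b a, hoff b a hab, one_apply_ne hab.ne']

end Flinear

section
variable {n K : Type*} [Fintype n] [DecidableEq n] [Field K] [CharZero K]

lemma eq_smul_one_of_dotProduct_mulVec_eq {S : Matrix n n K} (hS : S.IsSymm) {A : K}
    (h : ∀ x, x ⬝ᵥ S *ᵥ x = A * (x ⬝ᵥ x)) : S = A • 1 := by
  have hdiag : ∀ a, S a a = A := fun a => by
    simpa [mulVec_single_one] using h (Pi.single a 1)
  ext a b
  by_cases hab : a = b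
  · simp [hab, hdiag]
  · have := h (Pi.single a 1 + Pi.single b 1)
    simp [add_dotProduct, dotProduct_add, mulVec_add, hdiag, hS.apply a b, hab, Ne.symm hab] at this
    simp [hab]
    linear_combination this / 2

end

section Tight

variable {M N : ℕ}

def frameOperator (Φ : Fin M → Fin N → ℝ) (I : Finset (Fin M)) : Matrix (Fin N) (Fin N) ℝ :=
  ∑ k ∈ I, outer (Φ k)

variable (Φ : Fin M → Fin N → ℝ) (I : Finset (Fin M))

lemma frameOperator_isSymm : (frameOperator Φ I).IsSymm :=
  IsSymm.ext fun a b => by simp [frameOperator, Matrix.sum_apply, outer, vecMulVec_apply, mul_comm]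

lemma dotProduct_frameOperator_mulVec (x : Fin N → ℝ) :
    x ⬝ᵥ frameOperator Φ I *ᵥ x = ∑ k ∈ I, dot x (Φ k) ^ 2 := by
  simp only [frameOperator, sum_mulVec, dotProduct_sum, outer, vecMulVec_mulVec, op_smul_eq_smul,
    dotProduct_smul, smul_eq_mul]
  exact Finset.sum_congr rfl fun k _ => by rw [dotProduct_comm, ← sq]; rfl

lemma isTightOn_iff_frameOperator :
    IsTightOn Φ I ↔ ∃ A : ℝ, 0 < A ∧ frameOperator Φ I = A • 1 := by
  simp only [IsTightOn, ← dotProduct_frameOperator_mulVec]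
  refine exists_congr fun A => and_congr_right fun _ => ?_
  constructor
  · exact eq_smul_one_of_dotProduct_mulVec_eq (frameOperator_isSymm Φ I)
  · intro h x
    rw [h, smul_mulVec, one_mulVec, dotProduct_smul, smul_eq_mul]
    rfl

variable [NeZero N]

def Fhat (x : Fin N → ℝ) : (Fin (Fdim N) → ℝ) × ℝ := (Fmap x, x 0 ^ 2)

lemma Fhat_smul (c : ℝ) (x : Fin N → ℝ) : Fhat (c • x) = c ^ 2 • Fhat x := by
  rw [Fhat, Fhat, ← Flinear_outer, ← Flinear_outer]
  ext
  · simp [outer, smul_vecMulVec, vecMulVec_smul]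
    ring
  · simp [mul_pow]

lemma isTightOn_iff_s13 : IsTightOn Φ I ↔ ∃ A : ℝ, 0 < A ∧ ∑ k ∈ I, Fhat (Φ k) = (0, A) := by
  have hF : Flinear N (frameOperator Φ I) = ∑ k ∈ I, Fmap (Φ k) := by
    simp [frameOperator, map_sum, Flinear_outer]
  have h0 : frameOperator Φ I 0 0 = ∑ k ∈ I, Φ k 0 ^ 2 := by
    simp [frameOperator, outer, vecMulVec_apply, sq, Matrix.sum_apply]
  simp only [isTightOn_iff_frameOperator, Fhat, Prod.ext_iff, Prod.fst_sum, Prod.snd_sum, ← hF,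
    ← h0]
  constructor
  · rintro ⟨A, hA, hS⟩
    exact ⟨A, hA, by rw [hS, Flinear_smul_one], by simp [hS]⟩
  · rintro ⟨A, hA, hF, h0⟩
    exact ⟨A, hA, h0 ▸ eq_smul_one_of_Flinear_eq_zero (frameOperator_isSymm Φ I) hF⟩

lemma isTightOn_smul_iff (c : Fin M → ℝ) :
    IsTightOn (fun k => c k • Φ k) I ↔ ∃ A : ℝ, 0 < A ∧ ∑ k ∈ I, c k ^ 2 • Fhat (Φ k) = (0, A) := by
  simp only [isTightOn_iff_s13, Fhat_smul]

end Tight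

section Caratheodory

variable {K E ι : Type*} [Field K] [AddCommGroup E] [Module K E]

lemma not_linearIndepOn_of_span_fst_ne_top [FiniteDimensional K E] {u : ι → E × K}
    {s : Finset ι} (hs : s.card = Module.finrank K E + 1)
    (hu : Submodule.span K ((Prod.fst ∘ u) '' s) ≠ ⊤) : ¬ LinearIndepOn K u s := by
  intro hli
  have htop : Submodule.span K (Set.range fun i : s => u i) = ⊤ :=
    hli.span_eq_top_of_card_eq_finrank' (by simp [hs, Module.finrank_prod])
  apply hu
  have := congrArg (Submodule.map (LinearMap.fst K E K)) htop
  rw [Submodule.map_span, Submodule.map_top, Submodule.range_fst] at this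
  convert this using 2
  ext
  simp

variable [LinearOrder K] [IsStrictOrderedRing K]

lemma exists_mul_le_of_pos {s : Finset ι} {w τ : ι → K} (hw : ∀ i ∈ s, 0 < w i)
    (hτ : ∃ i ∈ s, τ i ≠ 0) : ∃ ε : K, ∃ i₀ ∈ s, ε * τ i₀ = w i₀ ∧ ∀ i ∈ s, ε * τ i ≤ w i := by
  wlog hpos : ∃ i ∈ s, 0 < τ i generalizing τ
  · push Not at hpos
    obtain ⟨i, hi, hτi⟩ := hτ
    obtain ⟨ε, i₀, hi₀, h₀, hle⟩ := this (τ := -τ) ⟨i, hi, by simpa using hτi⟩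
      ⟨i, hi, neg_pos.2 ((hpos i hi).lt_of_ne hτi)⟩
    exact ⟨-ε, i₀, hi₀, by simpa using h₀, fun i hi => by simpa using hle i hi⟩
  obtain ⟨i₀, hi₀, hmin⟩ := Finset.exists_min_image (s.filter (0 < τ ·)) (fun i => w i / τ i)
    (by simpa [Finset.Nonempty] using hpos)
  obtain ⟨hi₀s, hτ₀⟩ := Finset.mem_filter.1 hi₀
  refine ⟨w i₀ / τ i₀, i₀, hi₀s, div_mul_cancel₀ _ hτ₀.ne', fun i hi => ?_⟩
  rcases le_or_gt (τ i) 0 with h | h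
  · exact (mul_nonpos_of_nonneg_of_nonpos (div_pos (hw i₀ hi₀s) hτ₀).le h).trans (hw i hi).le
  · exact (le_div_iff₀ h).1 (hmin i (Finset.mem_filter.2 ⟨hi, h⟩))

lemma exists_nonneg_sum_erase_eq [DecidableEq ι] {s : Finset ι} {w : ι → K} {v : ι → E}
    (hw : ∀ i ∈ s, 0 < w i) (hv : ¬ LinearIndepOn K v s) :
    ∃ i₀ ∈ s, ∃ w' : ι → K, (∀ i ∈ s, 0 ≤ w' i) ∧
      ∑ i ∈ s.erase i₀, w' i • v i = ∑ i ∈ s, w i • v i := by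
  obtain ⟨τ, hτ, hτne⟩ := not_linearIndepOn_finset_iff.1 hv
  obtain ⟨ε, i₀, hi₀, h₀, hle⟩ := exists_mul_le_of_pos hw hτne
  refine ⟨i₀, hi₀, fun i => w i - ε * τ i, fun i hi => sub_nonneg.2 (hle i hi), ?_⟩
  rw [Finset.sum_erase _ (by simp [h₀])]
  simp only [sub_smul, Finset.sum_sub_distrib, mul_smul, ← Finset.smul_sum, hτ, smul_zero, sub_zero]

end Caratheodory

theorem statement13_general {M N : ℕ}
    (Φ : Fin M → Fin N → ℝ)
    (h1 : IsStrictlyMScalable Φ (Fdim N + 1)) (h2 : ¬ IsMScalable Φ (Fdim N)) :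
    Submodule.span ℝ (Set.range fun k => Fmap (Φ k)) = ⊤ := by
  by_contra hspan
  obtain rfl | hN := Nat.eq_zero_or_pos N
  · exact hspan (Subsingleton.elim (α := Submodule ℝ (Fin 0 → ℝ)) _ _)
  have : NeZero N := ⟨hN.ne'⟩
  obtain ⟨I, hI, c, hc, htight⟩ := h1
  obtain ⟨A, hA, hsum⟩ := (isTightOn_smul_iff Φ I c).1 htight
  have hdep : ¬ LinearIndepOn ℝ (fun k => Fhat (Φ k)) I :=
    not_linearIndepOn_of_span_fst_ne_top (by rw [hI, Module.finrank_fin_fun])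
      (ne_top_of_le_ne_top hspan (Submodule.span_mono (Set.image_subset_range _ _)))
  obtain ⟨i₀, hi₀, w, hw, hw_sum⟩ :=
    exists_nonneg_sum_erase_eq (fun i hi => pow_pos (hc i hi) 2) hdep
  refine h2 ⟨I.erase i₀, by rw [Finset.card_erase_of_mem hi₀, hI, Nat.add_sub_cancel],
    fun k => √(w k), fun _ _ => Real.sqrt_nonneg _, (isTightOn_smul_iff Φ _ _).2 ⟨A, hA, ?_⟩⟩
  rw [← hsum, ← hw_sum]
  exact Finset.sum_congr rfl fun k hk => by rw [Real.sq_sqrt (hw k (Finset.mem_of_mem_erase hk))]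

/-- Let `N ≥ 2`, `d = (N-1)(N+2)/2` and `M ≥ d+1`. If a frame
`Φ = {φ_k}_{k=1}^M` for `ℝ^N` is strictly `(d+1)`-scalable but not `d`-scalable, then
`F(Φ) = {F(φ_k)}_{k=1}^M` is a frame for `ℝ^d`, i.e. the `F(φ_k)` span `ℝ^d`. -/
theorem statement13 {M N : ℕ} (hN : 2 ≤ N) (hM : Fdim N + 1 ≤ M)
    (Φ : Fin M → Fin N → ℝ) (hframe : IsFrame Φ)
    (h1 : IsStrictlyMScalable Φ (Fdim N + 1)) (h2 : ¬ IsMScalable Φ (Fdim N)) :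
    Submodule.span ℝ (Set.range fun k => Fmap (Φ k)) = ⊤ :=
  statement13_general Φ h1 h2

end ScalableFrames
end
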